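/- arXiv:1209.3476 — 3 statements merged into one kernel-verified Lean document; each statement's English description precedes it below -/
import Mathlib

section
/- For every d ≥ 2, every n > d, and every integer k with 0 ≤ k ≤ d−1, there exists an arrangement of n codimension-one subtori in the flat d-torus whose complement has exactly n − k connected components; in particular {n−d+1, ..., n} ⊆ F(T^d, n). -/
/-- The flat `d`-dimensional torus `ℝ^d / ℤ^d`. -/
abbrev Torus (d : ℕ) : Type := Fin d → AddCircle (1 : ℝ)

/-- The quotient map `ℝ^d → ℝ^d/ℤ^d`. -/
noncomputable def torusQuot (d : ℕ) : (Fin d → ℝ) → Torus d := fun x i => (x i : AddCircle (1 : ℝ))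

/-- A codimension-one subtorus of the flat torus: the image of an affine hyperplane
`∑ aᵢ xᵢ = c` with rational coefficients `a ≠ 0`. -/
def IsCodimOneSubtorus {d : ℕ} (S : Set (Torus d)) : Prop :=
  ∃ (a : Fin d → ℚ) (c : ℝ), a ≠ 0 ∧
    S = torusQuot d '' {x : Fin d → ℝ | ∑ i, (a i : ℝ) * x i = c}

/-- The number of connected components of the complement of `A` in the torus. -/
noncomputable def torusRegions {d : ℕ} (A : Set (Torus d)) : ℕ :=
  Nat.card (ConnectedComponents ↥(Aᶜ))

/-- `F(T^d, n)`: the set of possible numbers of connected components of complements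
of unions of `n` distinct codimension-one subtori of the flat `d`-torus. -/
def FTorus (d n : ℕ) : Set ℕ :=
  {f | ∃ 𝒜 : Finset (Set (Torus d)), 𝒜.card = n ∧ (∀ S ∈ 𝒜, IsCodimOneSubtorus S) ∧
        f = torusRegions (⋃ S ∈ 𝒜, S)}

/- ---------------- auxiliary material ---------------- -/

namespace TorusAux

open Set

local notation "𝕊" => AddCircle (1 : ℝ)

lemma coeS_eq_iff {x y : ℝ} : (x : 𝕊) = (y : 𝕊) ↔ ∃ z : ℤ, x - y = z := by
  rw [QuotientAddGroup.eq_iff_sub_mem]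
  constructor
  · rintro h
    rcases AddSubgroup.mem_zmultiples_iff.mp h with ⟨z, hz⟩
    exact ⟨z, by simpa using hz.symm⟩
  · rintro ⟨z, hz⟩
    exact AddSubgroup.mem_zmultiples_iff.mpr ⟨z, by simpa using hz.symm⟩

lemma coeS_exists_rep (q : 𝕊) : ∃ x : ℝ, x ∈ Set.Ico (0:ℝ) 1 ∧ (x : 𝕊) = q := by
  obtain ⟨y, rfl⟩ := QuotientAddGroup.mk_surjective q
  refine ⟨Int.fract y, ⟨Int.fract_nonneg y, Int.fract_lt_one y⟩, ?_⟩
  rw [coeS_eq_iff]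
  exact ⟨-⌊y⌋, by rw [Int.fract]; push_cast; ring⟩

lemma coeS_inj_Ico {x y : ℝ} (hx : x ∈ Set.Ico (0:ℝ) 1) (hy : y ∈ Set.Ico (0:ℝ) 1)
    (h : (x : 𝕊) = y) : x = y := by
  rcases coeS_eq_iff.mp h with ⟨z, hz⟩
  have h1 : -1 < (z:ℝ) := by rw [← hz] at *; linarith [hx.1, hy.2]
  have h2 : (z:ℝ) < 1 := by rw [← hz] at *; linarith [hx.2, hy.1]
  have hz0 : z = 0 := by
    have h1' : -1 < z := by exact_mod_cast h1
    have h2' : z < 1 := by exact_mod_cast h2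
    omega
  rw [hz0] at hz
  push_cast at hz
  linarith

lemma continuous_coeS : Continuous ((↑) : ℝ → 𝕊) := continuous_quotient_mk'

lemma isOpenMap_coeS : IsOpenMap ((↑) : ℝ → 𝕊) := QuotientAddGroup.isOpenMap_coe

lemma isPreconnected_univ_circle : IsPreconnected (Set.univ : Set 𝕊) := by
  have : ((↑) : ℝ → 𝕊) '' Set.univ = Set.univ := by
    rw [Set.image_univ]
    exact QuotientAddGroup.mk_surjective.range_eq
  rw [← this]
  exact isPreconnected_univ.image _ continuous_coeS.continuousOn


lemma coe_zero_S : ((0:ℝ) : 𝕊) = 0 := rfl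

lemma circle_mem_arc {m : ℕ} (hm : 0 < m) (q : 𝕊)
    (h : ∀ j : Fin m, q ≠ ((((j:ℕ) : ℝ)/(m:ℝ)) : 𝕊)) :
    ∃ j : Fin m, q ∈ ((↑) : ℝ → 𝕊) '' Set.Ioo (((j:ℕ):ℝ)/(m:ℝ)) ((((j:ℕ):ℝ)+1)/(m:ℝ)) := by
  obtain ⟨x, hx, rfl⟩ := coeS_exists_rep q
  have hmR : (0:ℝ) < m := by exact_mod_cast hm
  have hy0 : (0:ℝ) ≤ m * x := mul_nonneg hmR.le hx.1
  have hy1 : (m:ℝ) * x < m := by nlinarith [hx.2]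
  set j : ℤ := ⌊(m:ℝ) * x⌋ with hj
  have hj0 : 0 ≤ j := Int.floor_nonneg.mpr hy0
  have hjle : (j:ℝ) ≤ m * x := Int.floor_le _
  have hjlt : (m:ℝ) * x < j + 1 := Int.lt_floor_add_one _
  have hjm : j < (m:ℤ) := by exact_mod_cast lt_of_le_of_lt hjle hy1
  set jn : ℕ := j.toNat with hjn
  have hjnR : (jn : ℝ) = (j:ℝ) := by exact_mod_cast Int.toNat_of_nonneg hj0
  have hjnm : jn < m := by omega
  refine ⟨⟨jn, hjnm⟩, x, ⟨?_, ?_⟩, rfl⟩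
  · rcases lt_or_eq_of_le hjle with hlt | heq
    · show ((⟨jn, hjnm⟩ : Fin m) : ℝ)/(m:ℝ) < x
      rw [show ((⟨jn, hjnm⟩ : Fin m) : ℝ) = (jn:ℝ) from rfl, hjnR, div_lt_iff₀ hmR]
      linarith
    · exfalso
      apply h ⟨jn, hjnm⟩
      have hxeq : x = ((⟨jn, hjnm⟩ : Fin m) : ℝ)/(m:ℝ) := by
        rw [show ((⟨jn, hjnm⟩ : Fin m) : ℝ) = (jn:ℝ) from rfl, hjnR, eq_div_iff hmR.ne']
        linarith
      rw [hxeq]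
  · show x < (((⟨jn, hjnm⟩ : Fin m) : ℝ)+1)/(m:ℝ)
    rw [show ((⟨jn, hjnm⟩ : Fin m) : ℝ) = (jn:ℝ) from rfl, hjnR, lt_div_iff₀ hmR]
    linarith

lemma pt_mem_Ico {m : ℕ} (hm : 0 < m) {j : ℕ} (hj : j < m) :
    (j:ℝ)/(m:ℝ) ∈ Set.Ico (0:ℝ) 1 := by
  have hmR : (0:ℝ) < m := by exact_mod_cast hm
  have hjR : (j:ℝ) < m := by exact_mod_cast hj
  constructor
  · positivity
  · rw [div_lt_one hmR]; exact hjR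

lemma arc_subset_Ico {m : ℕ} (hm : 0 < m) {j : ℕ} (hj : j < m) :
    Set.Ioo ((j:ℝ)/(m:ℝ)) (((j:ℝ)+1)/(m:ℝ)) ⊆ Set.Ico (0:ℝ) 1 := by
  have hmR : (0:ℝ) < m := by exact_mod_cast hm
  have hjR : (j:ℝ) + 1 ≤ m := by exact_mod_cast hj
  intro x hx
  constructor
  · have : (0:ℝ) ≤ (j:ℝ)/m := by positivity
    linarith [hx.1]
  · have : ((j:ℝ)+1)/m ≤ 1 := by rw [div_le_one hmR]; exact hjR
    linarith [hx.2]

lemma arc_ne_pt {m : ℕ} (hm : 0 < m) {j j' : ℕ} (hj : j < m) (hj' : j' < m) {q : 𝕊}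
    (hq : q ∈ ((↑) : ℝ → 𝕊) '' Set.Ioo ((j:ℝ)/(m:ℝ)) (((j:ℝ)+1)/(m:ℝ))) :
    q ≠ (((j':ℝ)/(m:ℝ) : ℝ) : 𝕊) := by
  obtain ⟨x, hx, rfl⟩ := hq
  intro hEq
  have hxm : x = (j':ℝ)/(m:ℝ) :=
    coeS_inj_Ico (arc_subset_Ico hm hj hx) (pt_mem_Ico hm hj') hEq
  have hmR : (0:ℝ) < m := by exact_mod_cast hm
  rw [hxm] at hx
  have h1 : (j:ℝ) < j' := by
    have := hx.1; rw [div_lt_div_iff₀ hmR hmR] at this; nlinarith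
  have h2 : (j':ℝ) < (j:ℝ) + 1 := by
    have := hx.2; rw [div_lt_div_iff₀ hmR hmR] at this; nlinarith
  have h1' : j < j' := by exact_mod_cast h1
  have h2' : j' < j + 1 := by exact_mod_cast h2
  omega

lemma arc_disjoint {m : ℕ} (hm : 0 < m) {j j' : ℕ} (hj : j < m) (hj' : j' < m) {q : 𝕊}
    (h1 : q ∈ ((↑) : ℝ → 𝕊) '' Set.Ioo ((j:ℝ)/(m:ℝ)) (((j:ℝ)+1)/(m:ℝ)))
    (h2 : q ∈ ((↑) : ℝ → 𝕊) '' Set.Ioo ((j':ℝ)/(m:ℝ)) (((j':ℝ)+1)/(m:ℝ))) : j = j' := by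
  obtain ⟨x, hx, rfl⟩ := h1
  obtain ⟨x', hx', hxx⟩ := h2
  have : x' = x :=
    coeS_inj_Ico (arc_subset_Ico hm hj' hx') (arc_subset_Ico hm hj hx) hxx
  subst this
  have hmR : (0:ℝ) < m := by exact_mod_cast hm
  have h1 : (j:ℝ) < (j':ℝ) + 1 := by
    have := lt_trans hx.1 hx'.2
    rw [div_lt_div_iff₀ hmR hmR] at this; nlinarith
  have h2 : (j':ℝ) < (j:ℝ) + 1 := by
    have := lt_trans hx'.1 hx.2
    rw [div_lt_div_iff₀ hmR hmR] at this; nlinarith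
  have h1' : j < j' + 1 := by exact_mod_cast h1
  have h2' : j' < j + 1 := by exact_mod_cast h2
  omega

lemma circle_ne_zero_iff (q : 𝕊) : q ≠ 0 ↔ q ∈ ((↑) : ℝ → 𝕊) '' Set.Ioo (0:ℝ) 1 := by
  constructor
  · intro h
    obtain ⟨x, hx, rfl⟩ := coeS_exists_rep q
    refine ⟨x, ⟨lt_of_le_of_ne hx.1 ?_, hx.2⟩, rfl⟩
    intro h0
    exact h (by rw [← h0, coe_zero_S])
  · rintro ⟨x, hx, rfl⟩ h0
    have : x = 0 := coeS_inj_Ico ⟨hx.1.le, hx.2⟩ ⟨le_refl _, one_pos⟩ (by rw [h0, coe_zero_S])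
    rw [this] at hx
    exact lt_irrefl _ hx.1


def SC {d : ℕ} (i0 : Fin d) (c : ℝ) : Set (Torus d) := {t | t i0 = (c : 𝕊)}

lemma mem_SC {d : ℕ} {i0 : Fin d} {c : ℝ} {t : Torus d} : t ∈ SC i0 c ↔ t i0 = (c : 𝕊) :=
  Iff.rfl

lemma SC_isCodimOne {d : ℕ} (i0 : Fin d) (c : ℝ) : IsCodimOneSubtorus (SC i0 c) := by
  refine ⟨Pi.single i0 1, c, ?_, ?_⟩
  · intro h
    have := congrFun h i0
    simp at this
  · have hset : {x : Fin d → ℝ | ∑ i, ((Pi.single i0 1 : Fin d → ℚ) i : ℝ) * x i = c}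
        = {x : Fin d → ℝ | x i0 = c} := by
      ext x
      have hsum : ∑ i, ((Pi.single i0 1 : Fin d → ℚ) i : ℝ) * x i = x i0 := by
        rw [Finset.sum_eq_single i0]
        · simp
        · intro b _ hb; simp [Pi.single_apply, hb]
        · intro h; exact absurd (Finset.mem_univ i0) h
      simp only [Set.mem_setOf_eq, hsum]
    rw [hset]
    ext t
    constructor
    · intro ht
      refine ⟨fun i => if i = i0 then c else Quotient.out (t i), by simp, ?_⟩
      funext i
      by_cases hi : i = i0
      · subst hi
        simp only [torusQuot, if_pos rfl]
        exact (mem_SC.mp ht).symm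
      · simp only [torusQuot, if_neg hi]
        exact Quotient.out_eq (t i)
    · rintro ⟨x, hx, rfl⟩
      show (x i0 : 𝕊) = (c : 𝕊)
      rw [Set.mem_setOf_eq.mp hx]

lemma SC_inj {d : ℕ} {i i' : Fin d} {c c' : ℝ} (h : SC i c = SC i' c') :
    i = i' ∧ ((c : 𝕊) = (c' : 𝕊)) := by
  by_cases hii : i = i'
  · subst hii
    refine ⟨rfl, ?_⟩
    have hmem : (fun _ : Fin d => (c : 𝕊)) ∈ SC i c := rfl
    rw [h] at hmem
    exact hmem
  · exfalso
    have hmem : (fun l : Fin d => if l = i then (c : 𝕊) else ((c' + 2⁻¹ : ℝ) : 𝕊)) ∈ SC i c := by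
      simp [mem_SC]
    rw [h] at hmem
    have heq : ((c' + 2⁻¹ : ℝ) : 𝕊) = (c' : 𝕊) := by
      have := mem_SC.mp hmem
      rwa [if_neg (fun hh => hii hh.symm)] at this
    rcases coeS_eq_iff.mp heq with ⟨z, hz⟩
    have hzr : (z:ℝ) = 2⁻¹ := by linarith
    have h2z : ((2*z : ℤ) : ℝ) = 1 := by push_cast; linarith
    have : (2*z : ℤ) = 1 := by exact_mod_cast h2z
    omega


lemma realize (d m k : ℕ) (hd : 2 ≤ d) (hm : 1 ≤ m) (hk : k ≤ d - 1) :
    m ∈ FTorus d (m + k) := by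
  classical
  have hd0 : 0 < d := by omega
  have hm0 : 0 < m := hm
  have hmR : (0:ℝ) < m := by exact_mod_cast hm
  set i₀ : Fin d := ⟨0, hd0⟩ with hi₀def
  have bibnd : ∀ i : Fin k, (i:ℕ) + 1 < d := fun i => by have := i.isLt; omega
  set bi : Fin k → Fin d := fun i => ⟨(i:ℕ)+1, bibnd i⟩ with hbidef
  set 𝒜 : Finset (Set (Torus d)) :=
    (Finset.univ.image fun j : Fin m => SC i₀ (((j:ℕ):ℝ)/(m:ℝ))) ∪
    (Finset.univ.image fun i : Fin k => SC (bi i) 0) with h𝒜def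
  -- injectivity of the two families
  have hinj1 : Function.Injective (fun j : Fin m => SC i₀ (((j:ℕ):ℝ)/(m:ℝ))) := by
    intro j j' h
    have h2 := (SC_inj h).2
    rcases coeS_eq_iff.mp h2 with ⟨z, hz⟩
    have hzr : ((j:ℕ):ℝ) - ((j':ℕ):ℝ) = z * m := by
      field_simp at hz; linarith
    have hjR : ((j:ℕ):ℝ) < m := by exact_mod_cast j.isLt
    have hj'R : ((j':ℕ):ℝ) < m := by exact_mod_cast j'.isLt
    have hj0 : (0:ℝ) ≤ ((j:ℕ):ℝ) := Nat.cast_nonneg _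
    have hj'0 : (0:ℝ) ≤ ((j':ℕ):ℝ) := Nat.cast_nonneg _
    have hz1 : (z:ℝ) < 1 := by nlinarith
    have hz2 : (-1:ℝ) < z := by nlinarith
    have hz0 : z = 0 := by
      have a1 : z < 1 := by exact_mod_cast hz1
      have a2 : -1 < z := by exact_mod_cast hz2
      omega
    rw [hz0] at hzr
    have : ((j:ℕ):ℝ) = ((j':ℕ):ℝ) := by push_cast at hzr ⊢; linarith
    have : (j:ℕ) = (j':ℕ) := by exact_mod_cast this
    exact Fin.ext this
  have hinj2 : Function.Injective (fun i : Fin k => SC (bi i) 0) := by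
    intro i i' h
    have h1 := (SC_inj h).1
    have : (i:ℕ) + 1 = (i':ℕ) + 1 := congrArg Fin.val h1
    exact Fin.ext (by omega)
  have hdisj : Disjoint (Finset.univ.image fun j : Fin m => SC i₀ (((j:ℕ):ℝ)/(m:ℝ)))
      (Finset.univ.image fun i : Fin k => SC (bi i) 0) := by
    rw [Finset.disjoint_left]
    rintro S hS hS'
    rcases Finset.mem_image.mp hS with ⟨j, -, rfl⟩
    rcases Finset.mem_image.mp hS' with ⟨i, -, hEq⟩
    have h1 := (SC_inj hEq.symm).1
    have h2 : (0:ℕ) = (i:ℕ) + 1 := congrArg Fin.val h1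
    omega
  have hcard : 𝒜.card = m + k := by
    rw [h𝒜def, Finset.card_union_of_disjoint hdisj,
      Finset.card_image_of_injective _ hinj1, Finset.card_image_of_injective _ hinj2,
      Finset.card_univ, Finset.card_univ, Fintype.card_fin, Fintype.card_fin]
  have hsub : ∀ S ∈ 𝒜, IsCodimOneSubtorus S := by
    intro S hS
    rw [h𝒜def, Finset.mem_union] at hS
    rcases hS with hS | hS
    · rcases Finset.mem_image.mp hS with ⟨j, -, rfl⟩; exact SC_isCodimOne _ _
    · rcases Finset.mem_image.mp hS with ⟨i, -, rfl⟩; exact SC_isCodimOne _ _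
  -- membership in the union
  have hUmem : ∀ t : Torus d, t ∈ (⋃ S ∈ 𝒜, S) ↔
      ((∃ j : Fin m, t i₀ = ((((j:ℕ):ℝ)/(m:ℝ) : ℝ) : 𝕊)) ∨ ∃ i : Fin k, t (bi i) = ((0:ℝ) : 𝕊)) := by
    intro t
    simp only [Set.mem_iUnion, exists_prop]
    constructor
    · rintro ⟨S, hS, htS⟩
      rw [h𝒜def, Finset.mem_union] at hS
      rcases hS with hS | hS
      · rcases Finset.mem_image.mp hS with ⟨j, -, rfl⟩
        exact Or.inl ⟨j, mem_SC.mp htS⟩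
      · rcases Finset.mem_image.mp hS with ⟨i, -, rfl⟩
        exact Or.inr ⟨i, mem_SC.mp htS⟩
    · rintro (⟨j, hj⟩ | ⟨i, hi⟩)
      · exact ⟨SC i₀ (((j:ℕ):ℝ)/(m:ℝ)),
          by rw [h𝒜def, Finset.mem_union]; exact Or.inl (Finset.mem_image_of_mem _ (Finset.mem_univ j)), hj⟩
      · exact ⟨SC (bi i) 0,
          by rw [h𝒜def, Finset.mem_union]; exact Or.inr (Finset.mem_image_of_mem _ (Finset.mem_univ i)), hi⟩
  -- the product pieces of the complement
  set u : Fin m → Fin d → Set 𝕊 := fun j i =>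
    if i = i₀ then ((↑) : ℝ → 𝕊) '' Set.Ioo (((j:ℕ):ℝ)/(m:ℝ)) ((((j:ℕ):ℝ)+1)/(m:ℝ))
    else if (i:ℕ) ≤ k then ((↑) : ℝ → 𝕊) '' Set.Ioo (0:ℝ) 1
    else Set.univ
    with hudef
  set W : Fin m → Set (Torus d) := fun j => Set.univ.pi (u j) with hWdef
  have hWmem : ∀ (j : Fin m) (t : Torus d), t ∈ W j ↔
      (t i₀ ∈ ((↑) : ℝ → 𝕊) '' Set.Ioo (((j:ℕ):ℝ)/(m:ℝ)) ((((j:ℕ):ℝ)+1)/(m:ℝ)) ∧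
        ∀ i : Fin d, i ≠ i₀ → (i:ℕ) ≤ k → t i ∈ ((↑) : ℝ → 𝕊) '' Set.Ioo (0:ℝ) 1) := by
    intro j t
    constructor
    · intro h
      refine ⟨?_, ?_⟩
      · have := h i₀ (Set.mem_univ _)
        simp only [hudef] at this
        rwa [if_pos trivial] at this
      · intro i hi hik
        have := h i (Set.mem_univ _)
        simp only [hudef] at this
        rwa [if_neg hi, if_pos hik] at this
    · rintro ⟨h1, h2⟩ i -
      simp only [hudef]
      by_cases hi : i = i₀
      · subst hi; rw [if_pos rfl]; exact h1
      · by_cases hik : (i:ℕ) ≤ k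
        · rw [if_neg hi, if_pos hik]; exact h2 i hi hik
        · rw [if_neg hi, if_neg hik]; exact Set.mem_univ _
  have hcompl : (⋃ S ∈ 𝒜, S)ᶜ = ⋃ j : Fin m, W j := by
    ext t
    rw [Set.mem_compl_iff, hUmem]
    push_neg
    constructor
    · rintro ⟨h1, h2⟩
      obtain ⟨j, hj⟩ := circle_mem_arc hm0 (t i₀) h1
      refine Set.mem_iUnion.mpr ⟨j, (hWmem j t).mpr ⟨hj, ?_⟩⟩
      intro i hi hik
      have hval : 1 ≤ (i:ℕ) := by
        rcases Nat.eq_zero_or_pos (i:ℕ) with h0 | h0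
        · exact absurd (Fin.ext h0 : i = i₀) hi
        · exact h0
      have hlt : (i:ℕ) - 1 < k := by omega
      have hbieq : bi ⟨(i:ℕ)-1, hlt⟩ = i := Fin.ext (by simp [hbidef]; omega)
      have hne0 : t i ≠ 0 := by
        have := h2 ⟨(i:ℕ)-1, hlt⟩
        rw [hbieq] at this
        rwa [coe_zero_S] at this
      exact (circle_ne_zero_iff _).mp hne0
    · intro h
      obtain ⟨j, hj⟩ := Set.mem_iUnion.mp h
      rw [hWmem] at hj
      constructor
      · intro j'
        exact arc_ne_pt hm0 j.isLt j'.isLt hj.1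
      · intro i
        have hne : bi i ≠ i₀ := by
          intro hEq
          have : (i:ℕ) + 1 = 0 := congrArg Fin.val hEq
          omega
        have hle : ((bi i : Fin d):ℕ) ≤ k := by
          have := i.isLt; simp only [hbidef]; omega
        have h2 := hj.2 (bi i) hne hle
        intro h0
        rw [coe_zero_S] at h0
        exact (circle_ne_zero_iff _).mpr h2 h0
  -- openness
  have hWopen : ∀ j, IsOpen (W j) := by
    intro j
    refine isOpen_set_pi Set.finite_univ ?_
    intro i _
    simp only [hudef]
    by_cases hi : i = i₀
    · rw [if_pos hi]; exact isOpenMap_coeS _ isOpen_Ioo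
    · rw [if_neg hi]
      by_cases hik : (i:ℕ) ≤ k
      · rw [if_pos hik]; exact isOpenMap_coeS _ isOpen_Ioo
      · rw [if_neg hik]; exact isOpen_univ
  -- connectedness
  have hWconn : ∀ j, IsPreconnected (W j) := by
    intro j
    refine isPreconnected_univ_pi ?_
    intro i
    simp only [hudef]
    by_cases hi : i = i₀
    · rw [if_pos hi]; exact isPreconnected_Ioo.image _ continuous_coeS.continuousOn
    · rw [if_neg hi]
      by_cases hik : (i:ℕ) ≤ k
      · rw [if_pos hik]; exact isPreconnected_Ioo.image _ continuous_coeS.continuousOn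
      · rw [if_neg hik]; exact isPreconnected_univ_circle
  -- base points
  set pt : Fin m → Torus d := fun j i =>
    if i = i₀ then (((((j:ℕ):ℝ)+2⁻¹)/(m:ℝ) : ℝ) : 𝕊) else ((2⁻¹ : ℝ) : 𝕊) with hptdef
  have hpt : ∀ j, pt j ∈ W j := by
    intro j
    rw [hWmem]
    constructor
    · show (if i₀ = i₀ then (((((j:ℕ):ℝ)+2⁻¹)/(m:ℝ) : ℝ) : 𝕊) else ((2⁻¹ : ℝ) : 𝕊)) ∈ _
      rw [if_pos rfl]
      refine ⟨(((j:ℕ):ℝ)+2⁻¹)/(m:ℝ), ⟨?_, ?_⟩, rfl⟩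
      · rw [div_lt_div_iff₀ hmR hmR]; nlinarith
      · rw [div_lt_div_iff₀ hmR hmR]; nlinarith
    · intro i hi _
      show (if i = i₀ then (((((j:ℕ):ℝ)+2⁻¹)/(m:ℝ) : ℝ) : 𝕊) else ((2⁻¹ : ℝ) : 𝕊)) ∈ _
      rw [if_neg hi]
      exact ⟨2⁻¹, ⟨by norm_num, by norm_num⟩, rfl⟩
  have hWdisjoint : ∀ (j j' : Fin m) (t : Torus d), t ∈ W j → t ∈ W j' → j = j' := by
    intro j j' t h h'
    have h1 := ((hWmem j t).mp h).1
    have h2 := ((hWmem j' t).mp h').1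
    exact Fin.ext (arc_disjoint hm0 j.isLt j'.isLt h1 h2)
  -- pass to the subtype
  set U : Set (Torus d) := ⋃ S ∈ 𝒜, S with hUdef
  set V : Fin m → Set ↥(Uᶜ) := fun j => Subtype.val ⁻¹' (W j) with hVdef
  have hUc : Uᶜ = ⋃ j : Fin m, W j := hcompl
  have hWsubU : ∀ j, W j ⊆ Uᶜ := by
    intro j
    rw [hUc]
    exact Set.subset_iUnion W j
  have hVcover : ∀ x : ↥(Uᶜ), ∃ j, x ∈ V j := by
    intro x
    have h2 : (x : Torus d) ∈ ⋃ j : Fin m, W j := hUc.le x.2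
    obtain ⟨j, hj⟩ := Set.mem_iUnion.mp h2
    exact ⟨j, hj⟩
  have hVopen : ∀ j, IsOpen (V j) := fun j => (hWopen j).preimage continuous_subtype_val
  have hVdisjoint : ∀ (j j' : Fin m) (x : ↥(Uᶜ)), x ∈ V j → x ∈ V j' → j = j' :=
    fun j j' x h h' => hWdisjoint j j' x.1 h h'
  have hVclosed : ∀ j, IsClosed (V j) := by
    intro j
    rw [← isOpen_compl_iff]
    have hceq : (V j)ᶜ = ⋃ j' : {j' : Fin m // j' ≠ j}, V j' := by
      ext x
      simp only [Set.mem_compl_iff, Set.mem_iUnion]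
      constructor
      · intro hx
        obtain ⟨j', hj'⟩ := hVcover x
        exact ⟨⟨j', fun hEq => hx (hEq ▸ hj')⟩, hj'⟩
      · rintro ⟨⟨j', hne⟩, hj'⟩ hx
        exact hne (hVdisjoint j' j x hj' hx)
    rw [hceq]
    exact isOpen_iUnion fun _ => hVopen _
  have hVconn : ∀ j, IsPreconnected (V j) := by
    intro j
    have himg : Subtype.val '' V j = W j := by
      rw [hVdef, Set.image_preimage_eq_inter_range, Subtype.range_val]
      exact Set.inter_eq_left.mpr (hWsubU j)
    have : IsPreconnected (Subtype.val '' V j) := himg ▸ hWconn j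
    exact (Topology.IsInducing.subtypeVal.isPreconnected_image).mp this
  set xpt : Fin m → ↥(Uᶜ) := fun j => ⟨pt j, hWsubU j (hpt j)⟩ with hxptdef
  have hxptV : ∀ j, xpt j ∈ V j := fun j => hpt j
  have hcompEq : ∀ (j : Fin m) (x : ↥(Uᶜ)), x ∈ V j → connectedComponent x = V j := by
    intro j x hx
    refine subset_antisymm ?_ ?_
    · exact IsClopen.connectedComponent_subset ⟨hVclosed j, hVopen j⟩ hx
    · exact (hVconn j).subset_connectedComponent hx
  have hbij : Function.Bijective (fun j : Fin m => (ConnectedComponents.mk (xpt j))) := by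
    constructor
    · intro j j' h
      rw [ConnectedComponents.coe_eq_coe] at h
      rw [hcompEq j (xpt j) (hxptV j), hcompEq j' (xpt j') (hxptV j')] at h
      exact hVdisjoint j j' (xpt j) (hxptV j) (h ▸ hxptV j)
    · intro c
      obtain ⟨x, rfl⟩ := ConnectedComponents.surjective_coe c
      obtain ⟨j, hj⟩ := hVcover x
      refine ⟨j, ?_⟩
      show (ConnectedComponents.mk (xpt j)) = ConnectedComponents.mk x
      rw [ConnectedComponents.coe_eq_coe, hcompEq j (xpt j) (hxptV j), hcompEq j x hj]
  refine ⟨𝒜, hcard, hsub, ?_⟩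
  have hcardEq := Nat.card_eq_of_bijective _ hbij
  rw [Nat.card_eq_fintype_card, Fintype.card_fin] at hcardEq
  rw [torusRegions, ← hUdef]
  exact hcardEq

end TorusAux




/-- for `n > d`, every value `n - k` with `0 ≤ k ≤ d - 1` is realizable;
in particular `{n-d+1, ..., n} ⊆ F(T^d, n)`. -/
theorem FTorus_contains_upper_interval (d n : ℕ) (hd : 2 ≤ d) (hn : d < n) :
    (∀ k : ℕ, k ≤ d - 1 → n - k ∈ FTorus d n) ∧
      Set.Icc (n - d + 1) n ⊆ FTorus d n := by
  have main : ∀ k : ℕ, k ≤ d - 1 → n - k ∈ FTorus d n := by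
    intro k hk
    have h := TorusAux.realize d (n - k) k hd (by omega) hk
    have heq : n - k + k = n := by omega
    rwa [heq] at h
  refine ⟨main, ?_⟩
  intro f hf
  obtain ⟨h1, h2⟩ := hf
  have hk : n - f ≤ d - 1 := by omega
  have hfe : n - (n - f) = f := by omega
  have := main (n - f) hk
  rwa [hfe] at this
end

section
/- For every d ≥ 2, every n > d, and every integer l ≥ 2(n−d), there exists an arrangement of n codimension-one subtori in the flat d-dimensional torus T^d whose complement has exactly l connected components. -/
/-!
Write `d = e + 2`, `m = n - d ≥ 1` and `l = k + 2m`. Take the `d - 1` subtori `xᵢ = 0` (`i ≠ 0`),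
the slanted subtorus `x₁ = k x₀ + 1/2` and the `m` subtori `x₀ = j / (2m(k + 1))`, `j < m`.
Lifted to the fundamental cube `[0, 1)^d`, their complement is the open cube `0 < xᵢ < 1` (`i ≠ 0`)
cut into `m` strips in `x₀`, each strip cut further by the lifts `x₁ - k x₀ ∈ 1/2 + ℤ`. The slanted
subtorus cuts each of the `m - 1` narrow strips into two convex cells and crosses the last, wide
strip `k` times, cutting it into `k + 2`. The quotient map is injective on the cube and open, so
the images of these `l` cells are disjoint connected open sets covering the complement: they are
its components.
-/
open Set Function

section Components

variable {X : Type*} [TopologicalSpace X] {ι : Type*}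

theorem card_connectedComponents_of_open_partition (V : ι → Set X) (hopen : ∀ i, IsOpen (V i))
    (hconn : ∀ i, IsPreconnected (V i)) (hne : ∀ i, (V i).Nonempty)
    (hdisj : Pairwise (Disjoint on V)) (hcover : ⋃ i, V i = univ) :
    Nat.card (ConnectedComponents X) = Nat.card ι := by
  choose p hp using hne
  have hmem (x : X) : ∃ i, x ∈ V i := mem_iUnion.mp (hcover ▸ mem_univ x)
  have hclopen (i : ι) : IsClopen (V i) := by
    refine ⟨?_, hopen i⟩
    have : (V i)ᶜ = ⋃ (j) (_ : j ≠ i), V j := by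
      ext x
      obtain ⟨j, hj⟩ := hmem x
      simp only [mem_compl_iff, mem_iUnion]
      exact ⟨fun hx => ⟨j, fun h => hx (h ▸ hj), hj⟩,
        fun ⟨j, hji, hxj⟩ hxi => (hdisj hji).ne_of_mem hxj hxi rfl⟩
    rw [← isOpen_compl_iff, this]
    exact isOpen_biUnion fun j _ => hopen j
  refine (Nat.card_congr (Equiv.ofBijective (fun i => ConnectedComponents.mk (p i))
    ⟨fun i j hij => ?_, fun c => ?_⟩)).symm
  · by_contra hne
    have hpj : p j ∈ V i := (hclopen i).connectedComponent_subset (hp i) <|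
      (ConnectedComponents.coe_eq_coe.mp hij) ▸ mem_connectedComponent
    exact (hdisj hne).ne_of_mem hpj (hp j) rfl
  · obtain ⟨x, rfl⟩ := ConnectedComponents.surjective_coe c
    obtain ⟨i, hi⟩ := hmem x
    exact ⟨i, ConnectedComponents.coe_eq_coe.mpr <|
      (connectedComponent_eq <| (hconn i).subset_connectedComponent hi (hp i)).symm⟩

theorem card_connectedComponents_subtype_of_open_partition {U : Set X} (V : ι → Set X)
    (hopen : ∀ i, IsOpen (V i)) (hconn : ∀ i, IsPreconnected (V i)) (hne : ∀ i, (V i).Nonempty)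
    (hdisj : Pairwise (Disjoint on V)) (hcover : U = ⋃ i, V i) :
    Nat.card (ConnectedComponents U) = Nat.card ι := by
  have hVU : ∀ i, V i ⊆ U := fun i => hcover ▸ subset_iUnion V i
  refine card_connectedComponents_of_open_partition (fun i => Subtype.val ⁻¹' V i)
    (fun i => (hopen i).preimage continuous_subtype_val) (fun i => ?_) (fun i => ?_)
    (fun i j hij => (hdisj hij).preimage _) ?_
  · rw [← Topology.IsInducing.subtypeVal.isPreconnected_image, Subtype.image_preimage_coe,
      inter_eq_self_of_subset_right (hVU i)]
    exact hconn i
  · obtain ⟨x, hx⟩ := hne i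
    exact ⟨⟨x, hVU i hx⟩, hx⟩
  · rw [← preimage_iUnion, ← hcover, Subtype.coe_preimage_self]

end Components

def unitBox (d : ℕ) : Set (Fin d → ℝ) := univ.pi fun _ => Ico 0 1

lemma coe_eq_coe_iff_of_mem_Ico_zero_one {x y : ℝ} (hx : x ∈ Ico (0:ℝ) 1) (hy : y ∈ Ico (0:ℝ) 1) :
    (x : AddCircle (1:ℝ)) = y ↔ x = y :=
  AddCircle.coe_eq_coe_iff_of_mem_Ico (by rwa [zero_add]) (by rwa [zero_add])

lemma coe_eq_zero_iff_exists_intCast {v : ℝ} : (v : AddCircle (1:ℝ)) = 0 ↔ ∃ z : ℤ, v = z := by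
  rw [AddCircle.coe_eq_zero_iff]
  simp [eq_comm]

lemma coe_ne_zero_iff_exists_Ioo {v : ℝ} :
    (v : AddCircle (1:ℝ)) ≠ 0 ↔ ∃ s : ℤ, v ∈ Ioo (s : ℝ) (s + 1) := by
  rw [Ne, coe_eq_zero_iff_exists_intCast]
  constructor
  · intro h
    exact ⟨⌊v⌋, (Int.floor_le v).lt_of_ne fun hv => h ⟨_, hv.symm⟩, Int.lt_floor_add_one v⟩
  · rintro ⟨s, hs₁, hs₂⟩ ⟨z, rfl⟩
    have : s < z := by exact_mod_cast hs₁
    have : z < s + 1 := by exact_mod_cast hs₂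
    omega

lemma isOpenQuotientMap_torusQuot (d : ℕ) : IsOpenQuotientMap (torusQuot d) :=
  IsOpenQuotientMap.piMap fun _ => QuotientAddGroup.isOpenQuotientMap_mk

lemma injOn_torusQuot_unitBox (d : ℕ) : InjOn (torusQuot d) (unitBox d) :=
  fun _ hx _ hy h => funext fun i =>
    (coe_eq_coe_iff_of_mem_Ico_zero_one (hx i (mem_univ i)) (hy i (mem_univ i))).mp (congrFun h i)

lemma exists_mem_unitBox_torusQuot_eq {d : ℕ} (ξ : Torus d) :
    ∃ x ∈ unitBox d, torusQuot d x = ξ := by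
  choose x hx hxξ using fun i => AddCircle.eq_coe_Ico (ξ i)
  exact ⟨x, fun i _ => hx i, funext hxξ⟩

lemma coe_sum_intCast_mul {d : ℕ} (a : Fin d → ℤ) (x : Fin d → ℝ) :
    ((∑ i, (a i : ℝ) * x i : ℝ) : AddCircle (1:ℝ)) = ∑ i, a i • torusQuot d x i := by
  simp_rw [← zsmul_eq_mul]
  exact map_sum (QuotientAddGroup.mk' _) _ _

lemma torusQuot_sub_single_intCast {d : ℕ} (x : Fin d → ℝ) (i₀ : Fin d) (z : ℤ) :
    torusQuot d (x - Pi.single i₀ (z : ℝ)) = torusQuot d x := by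
  funext i
  have : (((Pi.single i₀ (z : ℝ) : Fin d → ℝ) i : ℝ) : AddCircle (1:ℝ)) = 0 := by
    rw [coe_eq_zero_iff_exists_intCast, Pi.single_apply]
    split_ifs
    exacts [⟨z, rfl⟩, ⟨0, by simp⟩]
  simp [torusQuot, this]

lemma image_torusQuot_hyperplane {d : ℕ} (a : Fin d → ℤ) {i₀ : Fin d} (ha : a i₀ = 1) (c : ℝ) :
    torusQuot d '' {x | ∑ i, (a i : ℝ) * x i = c} =
      {ξ | ∑ i, a i • ξ i = (c : AddCircle (1:ℝ))} := by
  ext ξ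
  constructor
  · rintro ⟨x, hx, rfl⟩
    rw [mem_ofPred_eq, ← coe_sum_intCast_mul, mem_ofPred_eq.mp hx]
  · intro hξ
    obtain ⟨x, -, rfl⟩ := exists_mem_unitBox_torusQuot_eq ξ
    rw [mem_ofPred_eq, ← coe_sum_intCast_mul, ← sub_eq_zero, ← AddCircle.coe_sub,
      coe_eq_zero_iff_exists_intCast] at hξ
    obtain ⟨z, hz⟩ := hξ
    refine ⟨x - Pi.single i₀ (z : ℝ), ?_, torusQuot_sub_single_intCast x i₀ z⟩
    simp [mul_sub, Finset.sum_sub_distrib, Pi.single_apply, ha]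
    linarith

lemma isCodimOneSubtorus_setOf_sum_zsmul {d : ℕ} (a : Fin d → ℤ) {i₀ : Fin d} (ha : a i₀ = 1)
    (c : ℝ) : IsCodimOneSubtorus {ξ : Torus d | ∑ i, a i • ξ i = (c : AddCircle (1:ℝ))} := by
  refine ⟨fun i => a i, c, fun h => by simpa [ha] using congrFun h i₀, ?_⟩
  rw [← image_torusQuot_hyperplane a ha c]
  simp

def coordSubtorus {d : ℕ} (i : Fin d) (c : ℝ) : Set (Torus d) := {ξ | ξ i = c}

def slantSubtorus (e k : ℕ) : Set (Torus (e + 2)) :=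
  {ξ | ξ 1 - k • ξ 0 = ((1 / 2 : ℝ) : AddCircle (1:ℝ))}

lemma coe_half_ne_zero : ((1 / 2 : ℝ) : AddCircle (1:ℝ)) ≠ 0 :=
  coe_ne_zero_iff_exists_Ioo.mpr ⟨0, by norm_num, by norm_num⟩

lemma isCodimOneSubtorus_coordSubtorus {d : ℕ} (i : Fin d) (c : ℝ) :
    IsCodimOneSubtorus (coordSubtorus i c) := by
  convert isCodimOneSubtorus_setOf_sum_zsmul (Pi.single i 1) (Pi.single_eq_same i 1) c using 3
  simp [coordSubtorus, Pi.single_apply]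

lemma isCodimOneSubtorus_slantSubtorus (e k : ℕ) : IsCodimOneSubtorus (slantSubtorus e k) := by
  convert isCodimOneSubtorus_setOf_sum_zsmul
    (Pi.single 1 1 - (k : ℤ) • Pi.single 0 1 : Fin (e + 2) → ℤ) (i₀ := 1) (by simp)
    (1 / 2) using 3
  simp [slantSubtorus, sub_smul, Finset.sum_sub_distrib, Pi.single_apply]

lemma coordSubtorus_eq_coordSubtorus_iff {d : ℕ} {i i' : Fin d} {c c' : ℝ}
    (hc : c ∈ Ico (0:ℝ) 1) (hc' : c' ∈ Ico (0:ℝ) 1) :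
    coordSubtorus i c = coordSubtorus i' c' ↔ i = i' ∧ c = c' := by
  refine ⟨fun h => ?_, fun ⟨rfl, rfl⟩ => rfl⟩
  -- a point on the first subtorus whose `i'`-th coordinate is `c' + 1/2` unless `i' = i`
  have hξ : update (fun _ => (c' : AddCircle (1:ℝ)) + ((1 / 2 : ℝ) : AddCircle (1:ℝ))) i c ∈
      coordSubtorus i' c' := h ▸ update_self i _ _
  by_cases hi : i' = i
  · subst hi
    exact ⟨rfl, (coe_eq_coe_iff_of_mem_Ico_zero_one hc hc').mp ((update_self i' _ _).symm.trans hξ)⟩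
  · rw [coordSubtorus, mem_ofPred_eq, update_of_ne hi, add_eq_left] at hξ
    exact absurd hξ coe_half_ne_zero

lemma slantSubtorus_ne_coordSubtorus_level_zero {e k : ℕ} (i : Fin (e + 2)) :
    slantSubtorus e k ≠ coordSubtorus i 0 := by
  intro h
  have h0 : (0 : Torus (e + 2)) ∈ slantSubtorus e k := h ▸ rfl
  exact coe_half_ne_zero (by simpa [slantSubtorus] using h0.symm)

lemma slantSubtorus_ne_coordSubtorus_index_zero {e k : ℕ} (c : ℝ) :
    slantSubtorus e k ≠ coordSubtorus 0 c := by
  intro h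
  have h10 : (1 : Fin (e + 2)) ≠ 0 := by simp
  have hξ : update (fun _ => k • (c : AddCircle (1:ℝ))) 0 c ∈ slantSubtorus e k :=
    h ▸ update_self 0 _ _
  rw [slantSubtorus, mem_ofPred_eq, update_self, update_of_ne h10, sub_self] at hξ
  exact coe_half_ne_zero hξ.symm

lemma torusQuot_mem_coordSubtorus_iff {d : ℕ} {x : Fin d → ℝ} (hx : x ∈ unitBox d) (i : Fin d)
    {c : ℝ} (hc : c ∈ Ico (0:ℝ) 1) : torusQuot d x ∈ coordSubtorus i c ↔ x i = c :=
  coe_eq_coe_iff_of_mem_Ico_zero_one (hx i (mem_univ i)) hc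

lemma torusQuot_notMem_slantSubtorus_iff {e k : ℕ} (x : Fin (e + 2) → ℝ) :
    torusQuot (e + 2) x ∉ slantSubtorus e k ↔
      ∃ s : ℤ, x 1 - k * x 0 ∈ Ioo (s + 1 / 2 : ℝ) (s + 3 / 2) := by
  have h : torusQuot (e + 2) x 1 - k • torusQuot (e + 2) x 0 - ((1 / 2 : ℝ) : AddCircle (1:ℝ)) =
      ((x 1 - k * x 0 - 1 / 2 : ℝ) : AddCircle (1:ℝ)) := by
    simp [torusQuot, ← nsmul_eq_mul]
  rw [slantSubtorus, mem_ofPred_eq, ← sub_eq_zero.not, h, ← ne_eq, coe_ne_zero_iff_exists_Ioo]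
  refine exists_congr fun s => ?_
  simp only [mem_Ioo]
  constructor <;> exact fun h => ⟨by linarith [h.1], by linarith [h.2]⟩

section Strips

variable {α : Type*} [LinearOrder α] {f : ℕ → α} {y : α}

lemma exists_lt_mem_Ico_succ : ∀ {m : ℕ}, y ∈ Ico (f 0) (f m) → ∃ t < m, y ∈ Ico (f t) (f (t + 1))
  | 0, h => absurd h (by simp)
  | m + 1, h =>
    if hm : f m ≤ y then ⟨m, m.lt_succ_self, hm, h.2⟩
    else
      let ⟨t, ht, hy⟩ := exists_lt_mem_Ico_succ (m := m) ⟨h.1, not_le.mp hm⟩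
      ⟨t, ht.trans m.lt_succ_self, hy⟩

lemma Monotone.exists_lt_mem_Ioo_succ_iff (hf : Monotone f) {m : ℕ} (hy : y ∈ Ico (f 0) (f m)) :
    (∃ t < m, y ∈ Ioo (f t) (f (t + 1))) ↔ ∀ j < m, y ≠ f j := by
  constructor
  · rintro ⟨t, -, hyt, hyt'⟩ j - rfl
    rcases le_or_gt j t with hj | hj
    · exact (hf hj).not_gt hyt
    · exact (hf hj).not_gt hyt'
  · intro hne
    obtain ⟨t, ht, hyt, hyt'⟩ := exists_lt_mem_Ico_succ hy
    exact ⟨t, ht, hyt.lt_of_ne (hne t ht).symm, hyt'⟩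

end Strips

/-- The levels `c_j` (`j < m`) of the subtori `x₀ = c_j`; the value `cut m k m = 1` closes the last,
wide strip. The spacing `1 / (2m(k + 1))` keeps `k x₀ < 1/2` on the narrow strips, so that the
slanted subtorus cuts each of them into exactly two cells. -/
noncomputable def cut (m k j : ℕ) : ℝ := if j < m then j / (2 * m * (k + 1)) else 1

section Cut

variable {m k j : ℕ}

lemma cut_zero (hm : 0 < m) : cut m k 0 = 0 := by simp [cut, hm]

lemma cut_self : cut m k m = 1 := by simp [cut]

lemma cut_nonneg : 0 ≤ cut m k j := by
  unfold cut; split_ifs <;> positivity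

lemma succ_mul_cut_lt_half (hj : j < m) : (k + 1) * cut m k j < 1 / 2 := by
  have hm : (0 : ℝ) < m := by exact_mod_cast j.zero_le.trans_lt hj
  have : (j : ℝ) < m := by exact_mod_cast hj
  rw [cut, if_pos hj, mul_div_assoc', div_lt_iff₀ (by positivity)]
  nlinarith

lemma cut_lt_cut_succ (hj : j < m) : cut m k j < cut m k (j + 1) := by
  have h := succ_mul_cut_lt_half (k := k) hj
  have h0 : 0 ≤ cut m k j := cut_nonneg
  by_cases hj' : j + 1 < m
  · have hm : (0 : ℝ) < m := by exact_mod_cast j.zero_le.trans_lt hj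
    rw [cut, cut, if_pos hj, if_pos hj']
    gcongr
    linarith
  · have h1 : cut m k (j + 1) = 1 := if_neg hj'
    nlinarith

lemma monotone_cut : Monotone (cut m k) := by
  refine monotone_nat_of_le_succ fun j => ?_
  by_cases hj : j < m
  · exact (cut_lt_cut_succ hj).le
  · rw [cut, cut, if_neg hj, if_neg (by omega)]

lemma cut_mem_Ico (hj : j < m) : cut m k j ∈ Ico (0 : ℝ) 1 := by
  have := succ_mul_cut_lt_half (k := k) hj
  exact ⟨cut_nonneg, by nlinarith [cut_nonneg (m := m) (k := k) (j := j)]⟩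

lemma cut_injOn : InjOn (cut m k) (Iio m) := by
  intro j (hj : j < m) j' (hj' : j' < m) h
  have hm : (0 : ℝ) < m := by exact_mod_cast j.zero_le.trans_lt hj
  rw [cut, cut, if_pos hj, if_pos hj', div_left_inj' (by positivity)] at h
  exact_mod_cast h

end Cut

lemma exists_mem_Ioo_sub_mul_eq {a b k v : ℝ} (hab : a < b) (hk : 0 ≤ k)
    (hv : v ∈ Ioo (-(k * b)) (1 - k * a)) :
    ∃ x₀ ∈ Ioo a b, ∃ x₁ ∈ Ioo (0:ℝ) 1, x₁ - k * x₀ = v := by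
  -- on the segment `u ↦ (b - u (b - a), u)` from `(b, 0)` to `(a, 1)`, `x₁ - k x₀` is affine in `u`
  have hr : 0 < 1 + k * (b - a) := by nlinarith
  set u := (v + k * b) / (1 + k * (b - a))
  have hu : u ∈ Ioo (0:ℝ) 1 :=
    ⟨div_pos (by linarith [hv.1]) hr, (div_lt_one hr).mpr (by linarith [hv.2])⟩
  refine ⟨b - u * (b - a), ⟨?_, ?_⟩, u, hu, ?_⟩
  · nlinarith [hu.2]
  · nlinarith [hu.1]
  · linear_combination div_mul_cancel₀ (v + k * b) hr.ne'

section Cells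

variable {e : ℕ} {c : ℕ → ℝ} {k : ℝ}

def cell (c : ℕ → ℝ) (k : ℝ) (p : ℕ × ℤ) : Set (Fin (e + 2) → ℝ) :=
  {x | x 0 ∈ Ioo (c p.1) (c (p.1 + 1)) ∧ (∀ i : Fin (e + 1), x i.succ ∈ Ioo 0 1) ∧
    x 1 - k * x 0 ∈ Ioo (p.2 + 1 / 2 : ℝ) (p.2 + 3 / 2)}

lemma isOpen_cell (p : ℕ × ℤ) : IsOpen (cell (e := e) c k p) := by
  simp only [cell, ofPred_and, ofPred_forall]
  exact (isOpen_Ioo.preimage (continuous_apply 0)).inter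
    ((isOpen_iInter_of_finite fun i => isOpen_Ioo.preimage (continuous_apply _)).inter
      (isOpen_Ioo.preimage (by fun_prop)))

lemma convex_cell (p : ℕ × ℤ) : Convex ℝ (cell (e := e) c k p) := by
  simp only [cell, ofPred_and, ofPred_forall]
  exact ((convex_Ioo _ _).linear_preimage (LinearMap.proj 0)).inter
    ((convex_iInter fun i : Fin (e + 1) =>
      (convex_Ioo _ _).linear_preimage (LinearMap.proj i.succ)).inter
      ((convex_Ioo _ _).is_linear_preimage
        ⟨fun x y => by simp only [Pi.add_apply]; ring,
          fun a x => by simp only [Pi.smul_apply, smul_eq_mul]; ring⟩))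

lemma pairwise_disjoint_cell (hc : Monotone c) : Pairwise (Disjoint on cell (e := e) c k) := by
  rintro ⟨t, s⟩ ⟨t', s'⟩ hne
  refine disjoint_left.mpr fun x hx hx' => hne ?_
  have ht : t = t' := hc.pairwise_disjoint_on_Ioo_succ.eq <|
    not_disjoint_iff.mpr ⟨x 0, hx.1, hx'.1⟩
  have hs : s = s' := by
    have h₁ : (s : ℝ) < s' + 1 := by linarith [hx.2.2.1, hx'.2.2.2]
    have h₂ : (s' : ℝ) < s + 1 := by linarith [hx'.2.2.1, hx.2.2.2]
    norm_cast at h₁ h₂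
    omega
  rw [ht, hs]

lemma cell_subset_unitBox (hc : Monotone c) (hc₀ : c 0 = 0) {m : ℕ} (hcm : c m = 1)
    {p : ℕ × ℤ} (hp : p.1 < m) : cell (e := e) c k p ⊆ unitBox (e + 2) := by
  intro x hx i _
  cases i using Fin.cases with
  | zero => exact ⟨hc₀ ▸ (hc p.1.zero_le).trans hx.1.1.le, hx.1.2.trans_le (hcm ▸ hc hp)⟩
  | succ i => exact Ioo_subset_Ico_self (hx.2.1 i)

lemma cell_nonempty_iff {t : ℕ} {s : ℤ} (hc : c t < c (t + 1)) (hk : 0 ≤ k) :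
    (cell (e := e) c k (t, s)).Nonempty ↔
      (s : ℝ) < 1 / 2 - k * c t ∧ -(k * c (t + 1)) - 3 / 2 < s := by
  have hkc : k * c t ≤ k * c (t + 1) := mul_le_mul_of_nonneg_left hc.le hk
  constructor
  · rintro ⟨x, hx₀, hx, hs⟩
    have hx₁ := hx 0
    rw [Fin.succ_zero_eq_one'] at hx₁
    have h₁ : k * c t ≤ k * x 0 := mul_le_mul_of_nonneg_left hx₀.1.le hk
    have h₂ : k * x 0 ≤ k * c (t + 1) := mul_le_mul_of_nonneg_left hx₀.2.le hk
    constructor <;> linarith [hs.1, hs.2, hx₁.1, hx₁.2]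
  · rintro ⟨h₁, h₂⟩
    -- a value `v` of `x₁ - k x₀` both in the band of `s` and in the range `(-k c (t+1), 1 - k c t)`
    obtain ⟨v, hv₁, hv₂⟩ := exists_between (max_lt (lt_min (by linarith) (by linarith))
      (lt_min (by linarith) (by linarith)) :
      max ((s : ℝ) + 1 / 2) (-(k * c (t + 1))) < min ((s : ℝ) + 3 / 2) (1 - k * c t))
    rw [max_lt_iff] at hv₁
    rw [lt_min_iff] at hv₂
    obtain ⟨x₀, hx₀, x₁, hx₁, hv⟩ := exists_mem_Ioo_sub_mul_eq hc hk ⟨hv₁.2, hv₂.2⟩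
    refine ⟨Fin.cons x₀ fun i => if i = 0 then x₁ else 1 / 2, hx₀, fun i => ?_, ?_⟩
    · simp only [Fin.cons_succ]
      split_ifs
      exacts [hx₁, ⟨by norm_num, by norm_num⟩]
    · rw [Fin.cons_zero, Fin.cons_one, if_pos rfl, hv]
      exact ⟨hv₁.1, hv₂.1⟩

end Cells

section Arrangement

variable {e m k : ℕ}

/-- The nonempty cells over the strips of `cut m k`: two in each narrow strip `t < m - 1`, and
`k + 2` in the last strip, which the slanted subtorus crosses `k` times. -/
noncomputable def cellIndex (m k : ℕ) : Finset (ℕ × ℤ) :=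
  Finset.range (m - 1) ×ˢ Finset.Icc (-1) 0 ∪ {m - 1} ×ˢ Finset.Icc (-(k + 1 : ℤ)) 0

lemma card_cellIndex (hm : 0 < m) : (cellIndex m k).card = k + 2 * m := by
  have h₁ : (Finset.Icc (-1 : ℤ) 0).card = 2 := rfl
  have h₂ : (Finset.Icc (-(k + 1 : ℤ)) 0).card = k + 2 := by simp; omega
  rw [cellIndex, Finset.card_union_of_disjoint, Finset.card_product, Finset.card_product, h₁, h₂,
    Finset.card_range, Finset.card_singleton]
  · omega
  · rw [Finset.disjoint_left]
    rintro ⟨t, s⟩ h h'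
    simp only [Finset.mem_product, Finset.mem_range, Finset.mem_singleton] at h h'
    omega

lemma lt_of_mem_cellIndex (hm : 0 < m) {p : ℕ × ℤ} (hp : p ∈ cellIndex m k) : p.1 < m := by
  simp only [cellIndex, Finset.mem_union, Finset.mem_product, Finset.mem_range,
    Finset.mem_singleton] at hp
  omega

lemma cell_cut_nonempty_iff {t : ℕ} {s : ℤ} (ht : t < m) :
    (cell (e := e) (cut m k) k (t, s)).Nonempty ↔ (t, s) ∈ cellIndex m k := by
  have hcut : ∀ {j}, j < m → 0 ≤ (k : ℝ) * cut m k j ∧ (k : ℝ) * cut m k j < 1 / 2 :=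
    fun {j} hj => ⟨mul_nonneg k.cast_nonneg cut_nonneg,
      by nlinarith [succ_mul_cut_lt_half (k := k) hj, cut_nonneg (m := m) (k := k) (j := j)]⟩
  have hup : ⌈1 / 2 - (k : ℝ) * cut m k t⌉ = 1 :=
    Int.ceil_eq_iff.mpr ⟨by push_cast; linarith [hcut ht], by push_cast; linarith [hcut ht]⟩
  have hlow : ⌊-((k : ℝ) * cut m k (t + 1)) - 3 / 2⌋ =
      if t + 1 < m then -2 else -(k + 2 : ℤ) := by
    split_ifs with h
    · exact Int.floor_eq_iff.mpr ⟨by push_cast; linarith [hcut h], by push_cast; linarith [hcut h]⟩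
    · rw [show t + 1 = m by omega, cut_self]
      exact Int.floor_eq_iff.mpr ⟨by push_cast; linarith, by push_cast; linarith⟩
  rw [cell_nonempty_iff (cut_lt_cut_succ ht) k.cast_nonneg, ← Int.lt_ceil, ← Int.floor_lt, hup,
    hlow]
  simp only [cellIndex, Finset.mem_union, Finset.mem_product, Finset.mem_range, Finset.mem_Icc,
    Finset.mem_singleton]
  split_ifs <;> omega

variable (e m k) in
noncomputable def arrangement : Option (Fin (e + 1) ⊕ Fin m) → Set (Torus (e + 2))
  | none => slantSubtorus e k
  | some (.inl i) => coordSubtorus i.succ 0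
  | some (.inr j) => coordSubtorus 0 (cut m k j)

lemma arrangement_injective : Injective (arrangement e m k) := by
  have h₀ : (0 : ℝ) ∈ Ico (0 : ℝ) 1 := left_mem_Ico.mpr one_pos
  have hcut (j : Fin m) := cut_mem_Ico (k := k) j.isLt
  rintro (_ | i | j) (_ | i' | j') h <;> simp only [arrangement] at h
  · rfl
  · exact absurd h (slantSubtorus_ne_coordSubtorus_level_zero _)
  · exact absurd h (slantSubtorus_ne_coordSubtorus_index_zero _)
  · exact absurd h.symm (slantSubtorus_ne_coordSubtorus_level_zero _)
  · rw [Fin.succ_inj.mp ((coordSubtorus_eq_coordSubtorus_iff h₀ h₀).mp h).1]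
  · exact absurd ((coordSubtorus_eq_coordSubtorus_iff h₀ (hcut j')).mp h).1 (Fin.succ_ne_zero _)
  · exact absurd h.symm (slantSubtorus_ne_coordSubtorus_index_zero _)
  · exact absurd ((coordSubtorus_eq_coordSubtorus_iff (hcut j) h₀).mp h).1.symm
      (Fin.succ_ne_zero _)
  · rw [Fin.ext (cut_injOn j.isLt j'.isLt
      ((coordSubtorus_eq_coordSubtorus_iff (hcut j) (hcut j')).mp h).2)]

lemma torusQuot_notMem_iUnion_arrangement_iff {x : Fin (e + 2) → ℝ} (hx : x ∈ unitBox (e + 2)) :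
    torusQuot (e + 2) x ∉ ⋃ u, arrangement e m k u ↔
      (∃ s : ℤ, x 1 - k * x 0 ∈ Ioo (s + 1 / 2 : ℝ) (s + 3 / 2)) ∧
        (∀ i : Fin (e + 1), x i.succ ≠ 0) ∧ ∀ j < m, x 0 ≠ cut m k j := by
  simp only [mem_iUnion, not_exists, Option.forall, Sum.forall, arrangement,
    torusQuot_notMem_slantSubtorus_iff,
    torusQuot_mem_coordSubtorus_iff hx _ (left_mem_Ico.mpr one_pos),
    fun j : Fin m => torusQuot_mem_coordSubtorus_iff hx 0 (cut_mem_Ico (k := k) j.isLt),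
    Fin.forall_iff]

lemma compl_iUnion_arrangement (hm : 0 < m) :
    (⋃ u, arrangement e m k u)ᶜ =
      ⋃ p : cellIndex m k, torusQuot (e + 2) '' cell (cut m k) k p := by
  have hbox : ∀ {x : Fin (e + 2) → ℝ}, x ∈ unitBox (e + 2) → x 0 ∈ Ico (cut m k 0) (cut m k m) :=
    fun hx => by simpa [cut_zero hm, cut_self] using hx 0 (mem_univ 0)
  ext ξ
  constructor
  · intro hξ
    obtain ⟨x, hx, rfl⟩ := exists_mem_unitBox_torusQuot_eq ξ
    obtain ⟨⟨s, hs⟩, hi, hj⟩ := (torusQuot_notMem_iUnion_arrangement_iff hx).mp hξ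
    obtain ⟨t, ht, hx₀⟩ := (monotone_cut.exists_lt_mem_Ioo_succ_iff (hbox hx)).mpr hj
    have hxc : x ∈ cell (cut m k) k (t, s) :=
      ⟨hx₀, fun i => ⟨(hx _ (mem_univ _)).1.lt_of_ne (hi i).symm, (hx _ (mem_univ _)).2⟩, hs⟩
    exact mem_iUnion.mpr ⟨⟨(t, s), (cell_cut_nonempty_iff ht).mp ⟨x, hxc⟩⟩, x, hxc, rfl⟩
  · intro hξ
    obtain ⟨⟨p, hp⟩, x, hxc, rfl⟩ := mem_iUnion.mp hξ
    have ht := lt_of_mem_cellIndex hm hp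
    have hx := cell_subset_unitBox monotone_cut (cut_zero hm) cut_self ht hxc
    exact (torusQuot_notMem_iUnion_arrangement_iff hx).mpr ⟨⟨p.2, hxc.2.2⟩,
      fun i => (hxc.2.1 i).1.ne', (monotone_cut.exists_lt_mem_Ioo_succ_iff (hbox hx)).mp
        ⟨p.1, ht, hxc.1⟩⟩

lemma torusRegions_arrangement (hm : 0 < m) :
    torusRegions (⋃ u, arrangement e m k u) = k + 2 * m := by
  have hq := isOpenQuotientMap_torusQuot (e + 2)
  have hsub (p : cellIndex m k) : cell (cut m k) k (p : ℕ × ℤ) ⊆ unitBox (e + 2) :=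
    cell_subset_unitBox monotone_cut (cut_zero hm) cut_self (lt_of_mem_cellIndex hm p.2)
  rw [torusRegions, card_connectedComponents_subtype_of_open_partition _
    (fun p => hq.isOpenMap _ (isOpen_cell _))
    (fun p => (convex_cell _).isPreconnected.image _ hq.continuous.continuousOn)
    (fun p => ((cell_cut_nonempty_iff (lt_of_mem_cellIndex hm p.2)).mpr p.2).image _)
    (fun p p' hpp' => disjoint_image_image fun x hx x' hx' =>
      (pairwise_disjoint_cell monotone_cut (Subtype.coe_injective.ne hpp')).ne_of_mem hx hx' ∘
        injOn_torusQuot_unitBox _ (hsub p hx) (hsub p' hx'))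
    (compl_iUnion_arrangement hm), Nat.card_eq_finsetCard, card_cellIndex hm]

lemma add_two_mul_mem_FTorus (hm : 0 < m) : k + 2 * m ∈ FTorus (e + 2) (e + 2 + m) := by
  refine ⟨Finset.univ.map ⟨arrangement e m k, arrangement_injective⟩, ?_, ?_, ?_⟩
  · simp
    omega
  · simp only [Finset.mem_map, Finset.mem_univ, true_and, Embedding.coeFn_mk]
    rintro _ ⟨_ | i | j, rfl⟩
    exacts [isCodimOneSubtorus_slantSubtorus e k, isCodimOneSubtorus_coordSubtorus _ _,
      isCodimOneSubtorus_coordSubtorus _ _]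
  · rw [← torusRegions_arrangement (e := e) hm]
    simp
end Arrangement

/-- for `n > d`, every integer `l ≥ 2(n - d)` is realizable in `F(T^d, n)`. -/
theorem FTorus_contains_ge_two_n_sub_d (d n l : ℕ) (hd : 2 ≤ d) (hn : d < n)
    (hl : 2 * (n - d) ≤ l) : l ∈ FTorus d n := by
  obtain ⟨e, rfl⟩ : ∃ e, d = e + 2 := ⟨d - 2, by omega⟩
  obtain ⟨m, rfl⟩ : ∃ m, n = e + 2 + m := ⟨n - (e + 2), by omega⟩
  obtain ⟨k, rfl⟩ : ∃ k, l = k + 2 * m := ⟨l - 2 * m, by omega⟩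
  exact add_two_mul_mem_FTorus (by omega)
end

section
/- In the flat two-dimensional torus T² = ℝ²/ℤ², the union of the n−d+2 closed geodesics given by x₂ = 0, x₂ = k·x₁ + 1/2, and x₁ = c_j for j = 1, ..., n−d (where k ≥ 0 is an integer and each k·c_j + 1/2 is not an integer) divides the torus into exactly 2(n−d) + k connected components. -/
open Set Function

/-! Sorting the fractional parts of the `c j` as `s 0 < ⋯ < s (m - 1) < s m = s 0 + 1`, the
vertical geodesics cut the torus into the annuli `(s i, s (i + 1)) × S¹`. Cutting an annulus
along `x₂ = 0` leaves a rectangle, which the lifts `x₂ = k x₁ + β - z` of the other geodesic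
divide into convex cells, one for each integer `z` with `k s i + β - 2 < z < k s (i + 1) + β`;
when `k s i + β ∉ ℤ` there are `⌈k s (i + 1) + β⌉ - ⌈k s i + β⌉ + 2` of them. The cells map onto
pairwise disjoint open connected sets covering the complement, so they are its components, and
summed over the annuli the ceilings telescope to `⌈k (s 0 + 1) + β⌉ - ⌈k s 0 + β⌉ = k`. -/

theorem isClopen_of_pairwise_disjoint_isOpen {X ι : Type*} [TopologicalSpace X] {U : ι → Set X}
    (hopen : ∀ i, IsOpen (U i)) (hdisj : Pairwise (Disjoint on U)) (hunion : ⋃ i, U i = univ)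
    (i : ι) : IsClopen (U i) := by
  refine ⟨⟨?_⟩, hopen i⟩
  rw [compl_eq_univ_sdiff, ← hunion, iUnion_sdiff]
  refine isOpen_iUnion fun j ↦ ?_
  rcases eq_or_ne i j with rfl | hij
  · simp
  · simpa only [(hdisj hij.symm).sdiff_eq_left] using hopen j

open Set.Notation in
theorem Nat.card_connectedComponents_eq_of_partition {X ι : Type*} [TopologicalSpace X]
    {S : Set X} (U : ι → Set X) (hopen : ∀ i, IsOpen (U i)) (hconn : ∀ i, IsConnected (U i))
    (hdisj : Pairwise (Disjoint on U)) (hunion : ⋃ i, U i = S) :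
    Nat.card (ConnectedComponents S) = Nat.card ι := by
  have hsub : ∀ i, U i ⊆ S := fun i ↦ hunion ▸ subset_iUnion U i
  have hopen' : ∀ i, IsOpen (S ↓∩ U i) := fun i ↦ (hopen i).preimage continuous_subtype_val
  have hdisj' : Pairwise (Disjoint on fun i ↦ S ↓∩ U i) :=
    fun i j hij ↦ (hdisj hij).preimage _
  have hunion' : ⋃ i, S ↓∩ U i = univ := by
    rw [← preimage_iUnion, hunion, Subtype.coe_preimage_self]
  have hconn' : ∀ i, IsConnected (S ↓∩ U i) := fun i ↦ by
    obtain ⟨x, hx⟩ := (hconn i).nonempty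
    refine ⟨⟨⟨x, hsub i hx⟩, hx⟩, Topology.IsInducing.subtypeVal.isPreconnected_image.mp ?_⟩
    rw [Subtype.image_preimage_coe, inter_eq_right.2 (hsub i)]
    exact (hconn i).isPreconnected
  exact Nat.card_congr <| ConnectedComponents.equivOfIsClopenOfIsConnected
    (isClopen_of_pairwise_disjoint_isOpen hopen' hdisj' hunion') hdisj' hunion' hconn'

section FinStrips

variable {α : Type*} [LinearOrder α] {m : ℕ}

theorem Fin.exists_mem_Ico_castSucc_succ (s : Fin (m + 1) → α) {x : α}
    (hx : x ∈ Ico (s 0) (s (Fin.last m))) : ∃ i : Fin m, x ∈ Ico (s i.castSucc) (s i.succ) := by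
  induction m with
  | zero => exact absurd hx.2 (not_lt.2 hx.1)
  | succ m ih =>
    by_cases hlt : x < s (Fin.last m).castSucc
    · obtain ⟨i, hi⟩ := ih (fun j ↦ s j.castSucc) ⟨hx.1, hlt⟩
      exact ⟨i.castSucc, by simpa only [Fin.succ_castSucc] using hi⟩
    · exact ⟨Fin.last m, not_lt.1 hlt, by simpa only [Fin.succ_last] using hx.2⟩

variable {s : Fin (m + 1) → α}

theorem Monotone.notMem_Ioo_castSucc_succ (hs : Monotone s) (i : Fin m) (j : Fin (m + 1)) :
    s j ∉ Ioo (s i.castSucc) (s i.succ) := by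
  rintro ⟨hij, hji⟩
  rcases le_or_gt j i.castSucc with h | h
  · exact (hs h).not_gt hij
  · exact (hs (Fin.castSucc_lt_iff_succ_le.1 h)).not_gt hji

theorem Monotone.pairwise_disjoint_Ioo_castSucc_succ (hs : Monotone s) :
    Pairwise (Disjoint on fun i : Fin m ↦ Ioo (s i.castSucc) (s i.succ)) := by
  refine pairwise_disjoint_on _ |>.2 fun i j hij ↦ disjoint_left.2 fun x hi hj ↦ ?_
  exact (hs (Fin.castSucc_lt_iff_succ_le.1 (Fin.castSucc_lt_castSucc_iff.2 hij))).not_gt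
    (hj.1.trans hi.2)

theorem Monotone.Ioo_castSucc_succ_subset (hs : Monotone s) (i : Fin m) :
    Ioo (s i.castSucc) (s i.succ) ⊆ Ioo (s 0) (s (Fin.last m)) :=
  Ioo_subset_Ioo (hs (Fin.zero_le _)) (hs (Fin.le_last _))

theorem Fin.sum_succ_sub_castSucc {M : Type*} [AddCommGroup M] (f : Fin (m + 1) → M) :
    ∑ i : Fin m, (f i.succ - f i.castSucc) = f (Fin.last m) - f 0 := by
  induction m with
  | zero => simp
  | succ m ih =>
    rw [Fin.sum_univ_castSucc]
    simp only [Fin.succ_castSucc]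
    rw [ih (fun j ↦ f j.castSucc), Fin.succ_last, Fin.castSucc_zero]
    abel

end FinStrips

theorem Int.cast_notMem_Ioo (n z : ℤ) : (n : ℝ) ∉ Ioo (z : ℝ) (z + 1) := by
  rintro ⟨h₁, h₂⟩
  norm_cast at h₁ h₂
  omega

theorem natCast_mul_fract_add_ne_intCast {k : ℕ} {β x : ℝ} (h : ∀ n : ℤ, k * x + β ≠ n) (n : ℤ) :
    k * Int.fract x + β ≠ n := fun h' ↦
  h (n + k * ⌊x⌋) (by push_cast; linear_combination h' - (k : ℝ) * Int.fract_add_floor x)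

theorem AddCircle.coe_eq_coe_iff_exists_int {x y : ℝ} :
    (x : AddCircle (1 : ℝ)) = y ↔ ∃ n : ℤ, y - x = n := by
  rw [eq_comm, ← sub_eq_zero, ← AddCircle.coe_sub, AddCircle.coe_eq_zero_iff]
  simp [eq_comm]

theorem continuous_torusQuot (d : ℕ) : Continuous (torusQuot d) :=
  continuous_pi fun i ↦ (AddCircle.continuous_mk' 1).comp (continuous_apply i)

theorem isOpenMap_torusQuot (d : ℕ) : IsOpenMap (torusQuot d) :=
  IsOpenMap.piMap (fun _ ↦ QuotientAddGroup.isOpenMap_coe)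
    (Filter.Eventually.of_forall fun _ ↦ QuotientAddGroup.mk_surjective)

def geodesicArrangement (k : ℕ) (β : ℝ) {m : ℕ} (c : Fin m → ℝ) : Set (Torus 2) :=
  {y | y 1 = 0} ∪ {y | y 1 = k • y 0 + (β : AddCircle (1 : ℝ))} ∪
    ⋃ j, {y | y 0 = (c j : AddCircle (1 : ℝ))}

def stripCell (k : ℕ) (β a b : ℝ) (z : ℤ) : Set (Fin 2 → ℝ) :=
  {x | x 0 ∈ Ioo a b ∧ x 1 ∈ Ioo 0 1 ∧ k * x 0 + β - x 1 ∈ Ioo (z : ℝ) (z + 1)}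

-- exactly the `z` with `k a + β - 2 < z < k b + β`: the nonempty cells when `k a + β ∉ ℤ`
noncomputable def stripCellIndex (k : ℕ) (β a b : ℝ) : Finset ℤ :=
  Finset.Ico (⌈k * a + β⌉ - 2) ⌈k * b + β⌉

section Cells

variable (k : ℕ) (β : ℝ)

theorem notMem_geodesicArrangement {m : ℕ} {c : Fin m → ℝ} {y : Torus 2} :
    y ∉ geodesicArrangement k β c ↔
      y 1 ≠ 0 ∧ y 1 ≠ k • y 0 + (β : AddCircle (1 : ℝ)) ∧ ∀ j, y 0 ≠ (c j : AddCircle (1 : ℝ)) := by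
  simp [geodesicArrangement, and_assoc]

theorem geodesicArrangement_congr {m m' : ℕ} {c : Fin m → ℝ} {c' : Fin m' → ℝ}
    (h : range (fun j ↦ (c j : AddCircle (1 : ℝ))) = range fun j ↦ (c' j : AddCircle (1 : ℝ))) :
    geodesicArrangement k β c = geodesicArrangement k β c' := by
  have hlines : ∀ y : Torus 2, (∃ j, y 0 = c j) ↔ ∃ j, y 0 = c' j := fun y ↦ by
    simpa [eq_comm] using Set.ext_iff.1 h (y 0)
  ext y
  simp only [geodesicArrangement, mem_union, mem_iUnion, mem_ofPred_eq, hlines]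

theorem torusQuot_apply_one_eq_iff (x : Fin 2 → ℝ) :
    torusQuot 2 x 1 = k • torusQuot 2 x 0 + (β : AddCircle (1 : ℝ)) ↔
      ∃ n : ℤ, k * x 0 + β - x 1 = n := by
  simp only [torusQuot]
  rw [← AddCircle.coe_nsmul, nsmul_eq_mul, ← AddCircle.coe_add,
    AddCircle.coe_eq_coe_iff_exists_int]

variable {k β}

theorem isOpen_stripCell (a b : ℝ) (z : ℤ) : IsOpen (stripCell k β a b z) := by
  refine (isOpen_Ioo.preimage ?_).and ((isOpen_Ioo.preimage ?_).and (isOpen_Ioo.preimage ?_)) <;>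
    fun_prop

theorem convex_stripCell (a b : ℝ) (z : ℤ) : Convex ℝ (stripCell k β a b z) := by
  rintro x ⟨hx₀, hx₁, hx⟩ y ⟨hy₀, hy₁, hy⟩ s t hs ht hst
  refine ⟨convex_Ioo a b hx₀ hy₀ hs ht hst, convex_Ioo 0 1 hx₁ hy₁ hs ht hst, ?_⟩
  convert convex_Ioo _ _ hx hy hs ht hst using 1
  simp only [Pi.add_apply, Pi.smul_apply, smul_eq_mul]
  linear_combination (-β) * hst

theorem mem_stripCellIndex_of_mem {a b : ℝ} {z : ℤ} {x : Fin 2 → ℝ}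
    (hx : x ∈ stripCell k β a b z) : z ∈ stripCellIndex k β a b := by
  obtain ⟨⟨ha, hb⟩, ⟨h0, h1⟩, hz, hz'⟩ := hx
  have hka : (k : ℝ) * a ≤ k * x 0 := by gcongr
  have hkb : (k : ℝ) * x 0 ≤ k * b := by gcongr
  rw [stripCellIndex, Finset.mem_Ico, sub_le_iff_le_add, Int.ceil_le, Int.lt_ceil]
  push_cast
  constructor <;> linarith

theorem stripCell_nonempty {a b : ℝ} (hab : a < b) (ha : ∀ n : ℤ, k * a + β ≠ n) {z : ℤ}
    (hz : z ∈ stripCellIndex k β a b) : (stripCell k β a b z).Nonempty := by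
  rw [stripCellIndex, Finset.mem_Ico, sub_le_iff_le_add, Int.ceil_le, Int.lt_ceil] at hz
  set p := k * a + β
  set q := k * b + β
  have hpz : p < z + 2 := lt_of_le_of_ne (by exact_mod_cast hz.1) (by exact_mod_cast ha (z + 2))
  have hpq : p ≤ q := by simp only [p, q]; gcongr
  -- the witness lies on the segment from `(a, 1)` to `(b, 0)`, along which
  -- `k x₀ + β - x₁` increases affinely from `p - 1` to `q`
  obtain ⟨τ, hτ, hτ'⟩ := exists_between (show max (z : ℝ) (p - 1) < min (z + 1 : ℝ) q by
    simp only [max_lt_iff, lt_min_iff]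
    refine ⟨⟨?_, ?_⟩, ?_, ?_⟩ <;> linarith [hz.2])
  rw [max_lt_iff] at hτ
  rw [lt_min_iff] at hτ'
  have hD : 0 < q - p + 1 := by linarith
  set t := (τ - (p - 1)) / (q - p + 1)
  have ht : t * (q - p + 1) = τ - (p - 1) := div_mul_cancel₀ _ hD.ne'
  have ht0 : 0 < t := div_pos (by linarith) hD
  have ht1 : t < 1 := (div_lt_one hD).2 (by linarith)
  have hw : k * ((1 - t) * a + t * b) + β - (1 - t) = τ := by linear_combination ht
  refine ⟨![(1 - t) * a + t * b, 1 - t], ⟨?_, ?_⟩, ⟨?_, ?_⟩, ?_, ?_⟩ <;>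
    simp only [Matrix.cons_val_zero, Matrix.cons_val_one, hw]
  · nlinarith
  · nlinarith
  · linarith
  · linarith
  · exact hτ.1
  · exact hτ'.1

end Cells

section Strips

variable {k : ℕ} {β : ℝ} {m : ℕ} {s : Fin (m + 1) → ℝ}

theorem mem_Ico_of_mem_Ioo_castSucc_succ (hs : Monotone s) (hper : s (Fin.last m) = s 0 + 1)
    {i : Fin m} {x : ℝ} (hx : x ∈ Ioo (s i.castSucc) (s i.succ)) : x ∈ Ico (s 0) (s 0 + 1) :=
  hper ▸ Ioo_subset_Ico_self (hs.Ioo_castSucc_succ_subset i hx)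

theorem torusQuot_image_stripCell_subset (hs : StrictMono s) (hper : s (Fin.last m) = s 0 + 1)
    (i : Fin m) (z : ℤ) :
    torusQuot 2 '' stripCell k β (s i.castSucc) (s i.succ) z ⊆
      (geodesicArrangement k β fun j : Fin m ↦ s j.castSucc)ᶜ := by
  rintro _ ⟨x, ⟨hx₀, hx₁, hx⟩, rfl⟩
  refine (notMem_geodesicArrangement k β).2 ⟨fun h ↦ ?_, fun h ↦ ?_, fun j h ↦ ?_⟩
  · obtain ⟨n, hn⟩ := (AddCircle.coe_eq_zero_iff (1 : ℝ)).1 h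
    exact Int.cast_notMem_Ioo n 0 (by simpa [← hn] using hx₁)
  · obtain ⟨n, hn⟩ := (torusQuot_apply_one_eq_iff k β x).1 h
    exact Int.cast_notMem_Ioo n z (hn ▸ hx)
  · have hj : s j.castSucc ∈ Ico (s 0) (s 0 + 1) :=
      ⟨hs.monotone (Fin.zero_le _), hper ▸ hs (Fin.castSucc_lt_last j)⟩
    have hxj := (AddCircle.coe_eq_coe_iff_of_mem_Ico
      (mem_Ico_of_mem_Ioo_castSucc_succ hs.monotone hper hx₀) hj).1 h
    exact hs.monotone.notMem_Ioo_castSucc_succ i j.castSucc (hxj ▸ hx₀)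

theorem eq_of_torusQuot_eq_of_mem_stripCell (hs : Monotone s) (hper : s (Fin.last m) = s 0 + 1)
    {i i' : Fin m} {z z' : ℤ} {x x' : Fin 2 → ℝ}
    (hx : x ∈ stripCell k β (s i.castSucc) (s i.succ) z)
    (hx' : x' ∈ stripCell k β (s i'.castSucc) (s i'.succ) z')
    (h : torusQuot 2 x = torusQuot 2 x') : i = i' ∧ z = z' := by
  obtain ⟨hx₀, hx₁, hx⟩ := hx
  obtain ⟨hx₀', hx₁', hx'⟩ := hx'
  have h₀ : x 0 = x' 0 := (AddCircle.coe_eq_coe_iff_of_mem_Ico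
    (mem_Ico_of_mem_Ioo_castSucc_succ hs hper hx₀)
    (mem_Ico_of_mem_Ioo_castSucc_succ hs hper hx₀')).1 (congrFun h 0)
  have h₁ : x 1 = x' 1 := (AddCircle.coe_eq_coe_iff_of_mem_Ico (a := 0)
    (by simpa using Ioo_subset_Ico_self hx₁) (by simpa using Ioo_subset_Ico_self hx₁')).1
    (congrFun h 1)
  refine ⟨by_contra fun hne ↦ (hs.pairwise_disjoint_Ioo_castSucc_succ hne).ne_of_mem
    hx₀ hx₀' h₀, ?_⟩
  rw [h₀, h₁] at hx
  exact (Int.floor_eq_iff.2 ⟨hx.1.le, hx.2⟩).symm.trans (Int.floor_eq_iff.2 ⟨hx'.1.le, hx'.2⟩)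

theorem exists_mem_image_stripCell (hper : s (Fin.last m) = s 0 + 1)
    {y : Torus 2} (hy : y ∉ geodesicArrangement k β fun j : Fin m ↦ s j.castSucc) :
    ∃ (i : Fin m) (z : ℤ), y ∈ torusQuot 2 '' stripCell k β (s i.castSucc) (s i.succ) z := by
  obtain ⟨hy₁, hy₂, hy₃⟩ := (notMem_geodesicArrangement k β).1 hy
  set x : Fin 2 → ℝ := ![AddCircle.equivIco 1 (s 0) (y 0), AddCircle.equivIco 1 0 (y 1)]
  have hxy : torusQuot 2 x = y :=
    funext <| Fin.forall_fin_two.2 ⟨AddCircle.coe_equivIco, AddCircle.coe_equivIco⟩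
  have hx₀ : x 0 ∈ Ico (s 0) (s 0 + 1) := (AddCircle.equivIco 1 (s 0) (y 0)).2
  have hx₁ : x 1 ∈ Ico 0 (0 + 1) := (AddCircle.equivIco 1 0 (y 1)).2
  obtain ⟨i, hi⟩ := Fin.exists_mem_Ico_castSucc_succ s (hper ▸ hx₀)
  have hi' : x 0 ∈ Ioo (s i.castSucc) (s i.succ) :=
    ⟨hi.1.lt_of_ne fun h ↦ hy₃ i (by rw [← hxy, h]; rfl), hi.2⟩
  have hx₁' : x 1 ∈ Ioo 0 1 :=
    ⟨hx₁.1.lt_of_ne fun h ↦ hy₁ (by simp [← hxy, torusQuot, ← h]), by simpa using hx₁.2⟩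
  set w := k * x 0 + β - x 1
  have hw : w ≠ ⌊w⌋ := fun h ↦ hy₂ (hxy ▸ (torusQuot_apply_one_eq_iff k β x).2 ⟨_, h⟩)
  exact ⟨i, ⌊w⌋, x, ⟨hi', hx₁', (Int.floor_le w).lt_of_ne' hw, Int.lt_floor_add_one w⟩, hxy⟩

theorem sum_card_stripCellIndex (hs : Monotone s) (hper : s (Fin.last m) = s 0 + 1) :
    ∑ i : Fin m, (stripCellIndex k β (s i.castSucc) (s i.succ)).card = 2 * m + k := by
  set g : Fin (m + 1) → ℤ := fun j ↦ ⌈k * s j + β⌉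
  have hcard (i : Fin m) :
      ((stripCellIndex k β (s i.castSucc) (s i.succ)).card : ℤ) = g i.succ - g i.castSucc + 2 := by
    have : g i.castSucc ≤ g i.succ := Int.ceil_mono (by gcongr; exact hs i.castSucc_le_succ)
    simp only [g] at this ⊢
    rw [stripCellIndex, Int.card_Ico, Int.toNat_of_nonneg (by omega)]
    ring
  have hlast : g (Fin.last m) = g 0 + k := by
    simp only [g, hper, mul_add, mul_one, add_right_comm _ (k : ℝ), Int.ceil_add_natCast]
  have : ((∑ i : Fin m, (stripCellIndex k β (s i.castSucc) (s i.succ)).card : ℕ) : ℤ) =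
      2 * m + k := by
    push_cast [hcard]
    rw [Finset.sum_add_distrib, Fin.sum_succ_sub_castSucc, hlast]
    simp only [add_sub_cancel_left, Finset.sum_const, Finset.card_univ, Fintype.card_fin,
      Int.nsmul_eq_mul]
    ring
  exact_mod_cast this

theorem torusRegions_geodesicArrangement_of_strictMono (hs : StrictMono s)
    (hper : s (Fin.last m) = s 0 + 1) (hgen : ∀ (i : Fin m) (n : ℤ), k * s i.castSucc + β ≠ n) :
    torusRegions (geodesicArrangement k β fun i : Fin m ↦ s i.castSucc) = 2 * m + k := by
  let U (p : Σ i : Fin m, stripCellIndex k β (s i.castSucc) (s i.succ)) : Set (Torus 2) :=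
    torusQuot 2 '' stripCell k β (s p.1.castSucc) (s p.1.succ) p.2
  have hconn p : IsConnected (U p) :=
    ⟨(stripCell_nonempty (hs p.1.castSucc_lt_succ) (hgen p.1) p.2.2).image _,
      (convex_stripCell _ _ _).isPreconnected.image _ (continuous_torusQuot 2).continuousOn⟩
  have hdisj : Pairwise (Disjoint on U) := by
    rintro ⟨i, z, hz⟩ ⟨i', z', hz'⟩ hne
    refine disjoint_left.2 ?_
    rintro _ ⟨x, hx, rfl⟩ ⟨x', hx', h⟩
    obtain ⟨rfl, rfl⟩ := eq_of_torusQuot_eq_of_mem_stripCell hs.monotone hper hx hx' h.symm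
    exact hne rfl
  have hunion : ⋃ p, U p = (geodesicArrangement k β fun i : Fin m ↦ s i.castSucc)ᶜ := by
    refine subset_antisymm (iUnion_subset fun p ↦ torusQuot_image_stripCell_subset hs hper _ _)
      fun y hy ↦ ?_
    obtain ⟨i, z, x, hx, rfl⟩ := exists_mem_image_stripCell hper hy
    exact mem_iUnion.2 ⟨⟨i, z, mem_stripCellIndex_of_mem hx⟩, x, hx, rfl⟩
  rw [torusRegions, Nat.card_connectedComponents_eq_of_partition U
    (fun p ↦ isOpenMap_torusQuot 2 _ (isOpen_stripCell _ _ _)) hconn hdisj hunion,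
    Nat.card_eq_fintype_card, Fintype.card_sigma]
  simpa using sum_card_stripCellIndex (k := k) (β := β) hs.monotone hper

end Strips

theorem torusRegions_geodesicArrangement {k : ℕ} {β : ℝ} {m : ℕ} (hm : 0 < m) (c : Fin m → ℝ)
    (hc : Injective fun j ↦ (c j : AddCircle (1 : ℝ))) (hgen : ∀ j (n : ℤ), k * c j + β ≠ n) :
    torusRegions (geodesicArrangement k β c) = 2 * m + k := by
  obtain ⟨m, rfl⟩ := Nat.exists_eq_add_one_of_ne_zero hm.ne'
  set f := fun j ↦ Int.fract (c j)
  have hf : Injective f := fun i j h ↦ hc <| by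
    simpa [f] using congrArg ((↑) : ℝ → AddCircle (1 : ℝ)) h
  set σ := Tuple.sort f
  set t := f ∘ σ
  have ht : StrictMono t := (Tuple.monotone_sort f).strictMono_of_injective (hf.comp σ.injective)
  set s : Fin (m + 2) → ℝ := Fin.snoc t (t 0 + 1)
  have hs : StrictMono s := by
    simpa only [Fin.insertNth_last'] using Fin.strictMono_insertNth_last ht _
      (by simp only [t, f, comp_apply]
          linarith [Int.fract_lt_one (c (σ (Fin.last m))), Int.fract_nonneg (c (σ 0))])
  have hper : s (Fin.last _) = s 0 + 1 := by simp [s]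
  have hst (i : Fin (m + 1)) : s i.castSucc = t i := Fin.snoc_castSucc ..
  have hrange : range (fun i : Fin (m + 1) ↦ ((s i.castSucc : ℝ) : AddCircle (1 : ℝ))) =
      range fun j ↦ (c j : AddCircle (1 : ℝ)) := by
    simp only [hst, t, f, comp_apply, AddCircle.coe_fract]
    exact σ.surjective.range_comp fun j ↦ (c j : AddCircle (1 : ℝ))
  rw [← geodesicArrangement_congr k β hrange]
  exact torusRegions_geodesicArrangement_of_strictMono hs hper fun i ↦ by
    rw [hst]
    exact natCast_mul_fract_add_ne_intCast (hgen (σ i))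

/-- in the flat torus `T²`, the `n-d+2` closed geodesics `x₂ = 0`,
`x₂ = k·x₁ + 1/2` (`k ≥ 0` an integer) and `x₁ = c_j` (`j = 1, ..., n-d`), where the `c_j`
have distinct fractional parts and no `k·c_j + 1/2` is an integer, divide the torus into
exactly `2(n-d) + k` connected components. -/
theorem torus_geodesics_regions (n d k : ℕ) (hnd : d < n) (c : Fin (n - d) → ℝ)
    (hc : Function.Injective fun j => ((c j : ℝ) : AddCircle (1 : ℝ)))
    (hgen : ∀ j, ∀ z : ℤ, (k : ℝ) * c j + 1 / 2 ≠ (z : ℝ)) :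
    torusRegions
        ({y : Torus 2 | y 1 = 0} ∪
          {y : Torus 2 | y 1 = k • y 0 + (((1 : ℝ) / 2 : ℝ) : AddCircle (1 : ℝ))} ∪
          ⋃ j : Fin (n - d), {y : Torus 2 | y 0 = (c j : AddCircle (1 : ℝ))})
      = 2 * (n - d) + k :=
  torusRegions_geodesicArrangement (Nat.sub_pos_of_lt hnd) c hc hgen
end
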